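/- arXiv:math/0204117 — 3 statements merged into one kernel-verified Lean document; each statement's English description precedes it below -/
import Mathlib

section
/- Let c_k : X → ℂ be defined by c_k ≡ 1 for k even, c_{4ℓ+1}(x) = (−1)^{x_{4ℓ+3}} and c_{4ℓ+3}(x) = (−1)^{x_{4ℓ+1}} for ℓ ≥ 0, and define operators on L²(X, μ_X; ℂ) by (J_k f)(x) = (−1)^{x_1+⋯+x_{k−1}+1} · i · c_k(x) · f(x+δ_k) and (J'_k f)(x) = (−1)^{x_k} · i · (J_k f)(x). Then this representation is irreducible over ℂ: the only closed complex subspaces of L²(X, μ_X; ℂ) invariant under J_k and J'_k for all k ≥ 1 are {0} and L²(X, μ_X; ℂ). -/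
/-!
Common setup: `GWX` is the compact abelian group `X = ∏_{k ≥ 1} {0,1}` of 0-1 sequences
(with componentwise addition mod 2 and the product σ-algebra, which is generated by the
sets `X_k = {x : x_k = 1}`).  The coordinate `i : ℕ` of `x : GWX` represents the paper's
coordinate `x_{i+1}`, so the Lean index `k : ℕ` corresponds to the paper's index `k + 1`
throughout; in particular the paper's sign `(-1)^k` becomes `(-1)^(k+1)` here.
-/

open MeasureTheory Complex Filter
open scoped ENNReal

noncomputable section

abbrev GWX : Type := ℕ → ZMod 2

/-- `δ_k`: the sequence with `1` in the `k`-th place (the paper's `(k+1)`-th place)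
and `0` elsewhere. -/
def gwDelta (k : ℕ) : GWX := fun i => if i = k then 1 else 0

/-- The componentwise complement `x ↦ 1 - x`. -/
def gwFlip (x : GWX) : GWX := fun i => 1 - x i

/-- The sign `(-1)^{x_1 + ⋯ + x_{k-1} + 1}` of the paper, for the paper's index `k + 1`. -/
def gwSign (k : ℕ) (x : GWX) : ℂ := (-1 : ℂ) ^ ((∑ i ∈ Finset.range k, (x i).val) + 1)

/-- The functions `c_k` of Theorem 3.11: in the paper's (1-based) indexing, `c_k ≡ 1` for
`k` even, `c_{4ℓ+1}(x) = (-1)^{x_{4ℓ+3}}`, `c_{4ℓ+3}(x) = (-1)^{x_{4ℓ+1}}`.  In the Lean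
(0-based) indexing used here (`Lean k` = paper's `k+1`): `gwC k ≡ 1` for `k` odd,
`gwC k x = (-1)^{x (k+2)}` for `k ≡ 0 [MOD 4]`, and `gwC k x = (-1)^{x (k-2)}` for
`k ≡ 2 [MOD 4]`. -/
def gwC (k : ℕ) (x : GWX) : ℂ :=
  if k % 2 = 1 then 1
  else if k % 4 = 0 then (-1 : ℂ) ^ (x (k + 2)).val
  else (-1 : ℂ) ^ (x (k - 2)).val

/-!
Since `J_k² = -1`, the invariant subspace `V` is also invariant under `J'_k J_k`, which is
multiplication by the character `(-1)^{x_k}` up to a unit, and under the translation by `δ_k`,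
which is `J_k` up to multiplication by characters. These operators are self-adjoint, so `Vᗮ` is
invariant as well. Splitting `1 = v + w` along `V ⊕ Vᗮ`, the component `v` is then translation
invariant, hence constant, because the translations act on the Walsh functions by nontrivial
signs and the Walsh functions span a dense subspace of `L²`. So `1` lies in `V` or in `Vᗮ`,
and then so do all the Walsh functions, which forces that subspace to be everything.
-/

open scoped InnerProductSpace ComplexConjugate

theorem ZMod.neg_one_pow_val_add {R : Type*} [Ring R] (a b : ZMod 2) :
    (-1 : R) ^ (a + b).val = (-1) ^ a.val * (-1) ^ b.val := by
  rw [ZMod.val_add, ← pow_add, ← neg_one_pow_eq_pow_mod_two]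

theorem ZMod.eq_add_mul_neg_one_pow_val (φ : ZMod 2 → ℂ) (a : ZMod 2) :
    φ a = (φ 0 + φ 1) / 2 + (φ 0 - φ 1) / 2 * (-1) ^ a.val := by
  obtain rfl | rfl : a = 0 ∨ a = 1 := by decide +revert
  · simp only [ZMod.val_zero, pow_zero, mul_one]
    ring
  · simp only [ZMod.val_one, pow_one, mul_neg, mul_one]
    ring

section Walsh

variable {ι : Type*}

theorem neg_eq_self_of_zmod_two (x : ι → ZMod 2) : -x = x :=
  funext fun i => ZMod.neg_eq_self_mod_two (x i)

theorem add_add_self_of_zmod_two (x y : ι → ZMod 2) : x + y + y = x := by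
  nth_rw 2 [← neg_eq_self_of_zmod_two y]
  exact add_neg_cancel_right x y

def walsh (S : Finset ι) (x : ι → ZMod 2) : ℂ := ∏ i ∈ S, (-1) ^ (x i).val

@[simp]
theorem walsh_empty (x : ι → ZMod 2) : walsh ∅ x = 1 := Finset.prod_empty

theorem walsh_insert [DecidableEq ι] {a : ι} {S : Finset ι} (ha : a ∉ S) (x : ι → ZMod 2) :
    walsh (insert a S) x = (-1) ^ (x a).val * walsh S x :=
  Finset.prod_insert ha

theorem walsh_singleton (k : ι) (x : ι → ZMod 2) : walsh {k} x = (-1) ^ (x k).val :=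
  Finset.prod_singleton _ _

theorem walsh_add (S : Finset ι) (x y : ι → ZMod 2) :
    walsh S (x + y) = walsh S x * walsh S y := by
  simp only [walsh, Pi.add_apply, ZMod.neg_one_pow_val_add, Finset.prod_mul_distrib]

theorem walsh_single [DecidableEq ι] (S : Finset ι) (k : ι) :
    walsh S (Pi.single k 1) = if k ∈ S then -1 else 1 := by
  rw [walsh, ← Finset.prod_ite_eq' S k fun _ => (-1 : ℂ)]
  refine Finset.prod_congr rfl fun i _ => ?_
  rcases eq_or_ne i k with rfl | hik
  · simp [ZMod.val_one]
  · simp [hik]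

theorem walsh_add_single_of_notMem [DecidableEq ι] {S : Finset ι} {k : ι} (hk : k ∉ S)
    (x : ι → ZMod 2) : walsh S (x + Pi.single k 1) = walsh S x := by
  rw [walsh_add, walsh_single, if_neg hk, mul_one]

theorem walsh_mul_self (S : Finset ι) (x : ι → ZMod 2) : walsh S x * walsh S x = 1 := by
  rw [walsh, ← Finset.prod_mul_distrib]
  exact Finset.prod_eq_one fun _ _ => by rw [← mul_pow]; simp

theorem norm_walsh (S : Finset ι) (x : ι → ZMod 2) : ‖walsh S x‖ = 1 := by
  simp [walsh]

theorem conj_walsh (S : Finset ι) (x : ι → ZMod 2) : conj (walsh S x) = walsh S x := by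
  simp [walsh]

theorem measurable_walsh (S : Finset ι) : Measurable (walsh S) :=
  Finset.measurable_prod _ fun i _ =>
    (Measurable.of_discrete (f := fun a : ZMod 2 => (-1 : ℂ) ^ a.val)).comp (measurable_pi_apply i)

theorem prod_eq_sum_walsh [DecidableEq ι] (s : Finset ι) (φ : ι → ZMod 2 → ℂ)
    (x : ι → ZMod 2) :
    ∏ i ∈ s, φ i (x i) = ∑ T ∈ s.powerset,
      ((∏ i ∈ T, (φ i 0 - φ i 1) / 2) * ∏ i ∈ s \ T, (φ i 0 + φ i 1) / 2) * walsh T x := by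
  simp_rw [fun i => ZMod.eq_add_mul_neg_one_pow_val (φ i) (x i), add_comm _ (_ * _),
    Finset.prod_add, walsh, Finset.prod_mul_distrib]
  refine Finset.sum_congr rfl fun T _ => ?_
  ring

end Walsh

section WalshMul

variable {ι : Type*} {μ : Measure (ι → ZMod 2)}

theorem memLp_walsh_mul (S : Finset ι) (f : Lp ℂ 2 μ) :
    MemLp (fun x => walsh S x * f x) 2 μ :=
  (Lp.memLp f).of_le ((measurable_walsh S).aestronglyMeasurable.mul (Lp.aestronglyMeasurable f))
    (ae_of_all _ fun x => by simp [norm_walsh])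

def walshMul (S : Finset ι) (f : Lp ℂ 2 μ) : Lp ℂ 2 μ := (memLp_walsh_mul S f).toLp _

theorem coeFn_walshMul (S : Finset ι) (f : Lp ℂ 2 μ) :
    walshMul S f =ᵐ[μ] fun x => walsh S x * f x :=
  MemLp.coeFn_toLp _

@[simp]
theorem walshMul_empty (f : Lp ℂ 2 μ) : walshMul ∅ f = f := by
  refine Lp.ext ?_
  filter_upwards [coeFn_walshMul ∅ f] with x hx
  rw [hx, walsh_empty, one_mul]

theorem walshMul_insert [DecidableEq ι] {a : ι} {S : Finset ι} (ha : a ∉ S) (f : Lp ℂ 2 μ) :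
    walshMul (insert a S) f = walshMul {a} (walshMul S f) := by
  refine Lp.ext ?_
  filter_upwards [coeFn_walshMul (insert a S) f, coeFn_walshMul {a} (walshMul S f),
    coeFn_walshMul S f] with x h₁ h₂ h₃
  rw [h₁, h₂, h₃, walsh_insert ha, walsh_singleton, mul_assoc]

theorem walshMul_mem_of_forall_singleton_mem {V : Submodule ℂ (Lp ℂ 2 μ)}
    (hV : ∀ k, ∀ f ∈ V, walshMul {k} f ∈ V) (S : Finset ι) {f : Lp ℂ 2 μ} (hf : f ∈ V) :
    walshMul S f ∈ V := by
  classical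
  induction S using Finset.induction_on with
  | empty => simpa using hf
  | insert a S ha ih => simpa only [walshMul_insert ha] using hV a _ ih

theorem inner_walshMul_left (S : Finset ι) (f g : Lp ℂ 2 μ) :
    ⟪walshMul S f, g⟫_ℂ = ⟪f, walshMul S g⟫_ℂ := by
  simp only [L2.inner_def]
  refine integral_congr_ae ?_
  filter_upwards [coeFn_walshMul S f, coeFn_walshMul S g] with x hf hg
  simp only [hf, hg, RCLike.inner_apply, map_mul, conj_walsh]
  ring

variable [IsFiniteMeasure μ]

def walshLp (S : Finset ι) : Lp ℂ 2 μ := walshMul S (Lp.const 2 μ 1)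

@[simp]
theorem walshLp_empty : walshLp (μ := μ) ∅ = Lp.const 2 μ 1 := walshMul_empty _

theorem coeFn_walshLp (S : Finset ι) : (walshLp S : Lp ℂ 2 μ) =ᵐ[μ] walsh S := by
  filter_upwards [coeFn_walshMul S (Lp.const 2 μ (1 : ℂ)),
    Lp.coeFn_const (p := 2) (μ := μ) (1 : ℂ)] with x h₁ h₂
  rw [walshLp, h₁, h₂, Function.const_apply, mul_one]

theorem inner_walshLp (S : Finset ι) (f : Lp ℂ 2 μ) :
    ⟪walshLp S, f⟫_ℂ = ∫ x, walsh S x * f x ∂μ := by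
  rw [L2.inner_def]
  refine integral_congr_ae ?_
  filter_upwards [coeFn_walshLp S] with x hx
  rw [hx, RCLike.inner_apply, conj_walsh, mul_comm]

end WalshMul

section Shift

variable {G : Type*} [MeasurableSpace G] [AddGroup G] [MeasurableAdd G] {μ : Measure G}
  [μ.IsAddRightInvariant]

def shift (y : G) : Lp ℂ 2 μ →ₗᵢ[ℂ] Lp ℂ 2 μ :=
  Lp.compMeasurePreservingₗᵢ ℂ (· + y) (measurePreserving_add_right μ y)

theorem coeFn_shift (y : G) (f : Lp ℂ 2 μ) : shift y f =ᵐ[μ] fun x => f (x + y) :=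
  Lp.coeFn_compMeasurePreserving _ _

theorem shift_shift (y z : G) (f : Lp ℂ 2 μ) : shift y (shift z f) = shift (y + z) f := by
  refine Lp.ext ?_
  filter_upwards [coeFn_shift y (shift z f), coeFn_shift (y + z) f,
    (measurePreserving_add_right μ y).quasiMeasurePreserving.ae_eq_comp (coeFn_shift z f)]
    with x h₁ h₂ h₃
  simp only [Function.comp_apply] at h₃
  rw [h₁, h₂, h₃, add_assoc]

theorem shift_zero (f : Lp ℂ 2 μ) : shift 0 f = f := by
  refine Lp.ext ?_
  filter_upwards [coeFn_shift 0 f] with x hx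
  rw [hx, add_zero]

theorem shift_const [IsFiniteMeasure μ] (y : G) (c : ℂ) :
    shift y (Lp.const 2 μ c) = Lp.const 2 μ c :=
  rfl

theorem inner_shift_left (y : G) (f g : Lp ℂ 2 μ) :
    ⟪shift y f, g⟫_ℂ = ⟪f, shift (-y) g⟫_ℂ := by
  calc ⟪shift y f, g⟫_ℂ = ⟪shift y f, shift y (shift (-y) g)⟫_ℂ := by
        rw [shift_shift, add_neg_cancel, shift_zero]
    _ = ⟪f, shift (-y) g⟫_ℂ := LinearIsometry.inner_map_map _ _ _

end Shift

theorem shift_walshLp {ι : Type*} {μ : Measure (ι → ZMod 2)} [IsFiniteMeasure μ]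
    [μ.IsAddRightInvariant] (y : ι → ZMod 2) (S : Finset ι) :
    shift y (walshLp (μ := μ) S) = walsh S y • walshLp S := by
  refine Lp.ext ?_
  filter_upwards [coeFn_shift y (walshLp (μ := μ) S),
    Lp.coeFn_smul (walsh S y) (walshLp (μ := μ) S), coeFn_walshLp (μ := μ) S,
    (measurePreserving_add_right μ y).quasiMeasurePreserving.ae_eq_comp (coeFn_walshLp (μ := μ) S)]
    with x h₁ h₂ h₃ h₄
  simp only [Function.comp_apply] at h₄
  rw [h₁, h₂, Pi.smul_apply, h₃, smul_eq_mul, h₄, walsh_add, mul_comm]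

section Uniqueness

variable {ι : Type*} {μ : Measure (ι → ZMod 2)} {h : (ι → ZMod 2) → ℂ}

theorem integrable_walsh_mul (S : Finset ι) (hh : Integrable h μ) :
    Integrable (fun x => walsh S x * h x) μ :=
  hh.bdd_mul (measurable_walsh S).aestronglyMeasurable (ae_of_all _ fun x => (norm_walsh S x).le)

/-- The indicator of a cylinder `{x | ∀ i ∈ s, x i ∈ t i}` is a combination of the Walsh
functions `walsh T`, `T ⊆ s`. -/
theorem setIntegral_pi_eq_zero (hh : Integrable h μ) (h0 : ∀ S, ∫ x, walsh S x * h x ∂μ = 0)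
    (s : Finset ι) (t : ι → Set (ZMod 2)) : ∫ x in (s : Set ι).pi t, h x ∂μ = 0 := by
  classical
  have hind (x : ι → ZMod 2) : ((s : Set ι).pi t).indicator h x =
      ((s : Set ι).pi t).indicator 1 x * h x := by
    simp only [Set.indicator_apply, Pi.one_apply, ite_mul, one_mul, zero_mul]
  rw [← integral_indicator (MeasurableSet.pi s.countable_toSet fun _ _ => .of_discrete)]
  simp_rw [hind, Set.indicator_pi_one_apply, prod_eq_sum_walsh, Finset.sum_mul,
    mul_assoc _ (walsh _ _)]
  rw [integral_finsetSum _ fun T _ => (integrable_walsh_mul T hh).const_mul _]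
  exact Finset.sum_eq_zero fun T _ => by rw [integral_const_mul, h0, mul_zero]

theorem setIntegral_eq_zero_of_forall_integral_walsh_mul_eq_zero (hh : Integrable h μ)
    (h0 : ∀ S, ∫ x, walsh S x * h x ∂μ = 0) {A : Set (ι → ZMod 2)} (hA : MeasurableSet A) :
    ∫ x in A, h x ∂μ = 0 := by
  induction A, hA using MeasurableSpace.induction_on_inter generateFrom_squareCylinders.symm
    (isPiSystem_squareCylinders (fun _ => MeasurableSpace.isPiSystem_measurableSet)
      fun _ => MeasurableSet.univ) with
  | empty => simp
  | basic A hA =>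
    obtain ⟨s, t, -, rfl⟩ := hA
    exact setIntegral_pi_eq_zero hh h0 s t
  | compl A hA hA0 =>
    have h_univ : ∫ x, h x ∂μ = 0 := by simpa using h0 ∅
    linear_combination integral_add_compl hA hh - hA0 + h_univ
  | iUnion A hdisj hA hA0 =>
    rw [integral_iUnion hA hdisj hh.integrableOn]
    simp [hA0]

theorem Lp.eq_zero_of_forall_inner_walshLp_eq_zero [IsFiniteMeasure μ] {f : Lp ℂ 2 μ}
    (hf : ∀ S : Finset ι, ⟪walshLp S, f⟫_ℂ = 0) : f = 0 := by
  have hint : Integrable f μ := (Lp.memLp f).integrable one_le_two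
  have h0 (S : Finset ι) : ∫ x, walsh S x * f x ∂μ = 0 := by rw [← inner_walshLp, hf]
  refine Lp.ext ((hint.ae_eq_zero_of_forall_setIntegral_eq_zero fun A hA _ => ?_).trans
    (Lp.coeFn_zero ℂ 2 μ).symm)
  exact setIntegral_eq_zero_of_forall_integral_walsh_mul_eq_zero hint h0 hA

end Uniqueness

section Invariant

variable {ι : Type*} [DecidableEq ι] {μ : Measure (ι → ZMod 2)} [μ.IsAddRightInvariant]

structure IsShiftWalshInvariant (V : Submodule ℂ (Lp ℂ 2 μ)) : Prop where
  shift_mem : ∀ k, ∀ f ∈ V, shift (Pi.single k 1) f ∈ V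
  walshMul_mem : ∀ k, ∀ f ∈ V, walshMul {k} f ∈ V

theorem inner_walshLp_eq_zero_of_forall_shift_eq [IsFiniteMeasure μ] {S : Finset ι}
    (hS : S.Nonempty) {u : Lp ℂ 2 μ} (hu : ∀ k, shift (Pi.single k 1) u = u) :
    ⟪walshLp S, u⟫_ℂ = 0 := by
  obtain ⟨k, hk⟩ := hS
  refine self_eq_neg.mp ?_
  calc ⟪walshLp S, u⟫_ℂ = ⟪walshLp S, shift (Pi.single k 1) u⟫_ℂ := by rw [hu]
    _ = ⟪shift (Pi.single k 1) (walshLp S), u⟫_ℂ := by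
      rw [inner_shift_left, neg_eq_self_of_zmod_two]
    _ = -⟪walshLp S, u⟫_ℂ := by
      rw [shift_walshLp, walsh_single, if_pos hk, neg_one_smul, inner_neg_left]

theorem exists_eq_smul_const_of_forall_shift_eq [IsProbabilityMeasure μ] {u : Lp ℂ 2 μ}
    (hu : ∀ k, shift (Pi.single k 1) u = u) : ∃ c : ℂ, u = c • Lp.const 2 μ 1 := by
  refine ⟨⟪Lp.const 2 μ 1, u⟫_ℂ, sub_eq_zero.mp (Lp.eq_zero_of_forall_inner_walshLp_eq_zero
    fun S => ?_)⟩
  rw [inner_sub_right, inner_smul_right]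
  rcases S.eq_empty_or_nonempty with rfl | hS
  · have h_one : ⟪Lp.const 2 μ (1 : ℂ), Lp.const 2 μ 1⟫_ℂ = 1 := by
      simp [inner_self_eq_norm_sq_to_K, Lp.norm_const]
    rw [walshLp_empty, h_one, mul_one, sub_self]
  · rw [inner_walshLp_eq_zero_of_forall_shift_eq hS hu,
      inner_walshLp_eq_zero_of_forall_shift_eq hS fun k => shift_const _ _, mul_zero, sub_zero]

namespace IsShiftWalshInvariant

variable {V : Submodule ℂ (Lp ℂ 2 μ)}

theorem orthogonal (hV : IsShiftWalshInvariant V) : IsShiftWalshInvariant Vᗮ where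
  shift_mem k f hf u hu := by
    rw [← neg_eq_self_of_zmod_two (Pi.single k 1), ← inner_shift_left]
    exact hf _ (hV.shift_mem k u hu)
  walshMul_mem k f hf u hu := by
    rw [← inner_walshMul_left]
    exact hf _ (hV.walshMul_mem k u hu)

theorem eq_top_of_const_mem [IsFiniteMeasure μ] (hV : IsShiftWalshInvariant V)
    (hVc : IsClosed (V : Set (Lp ℂ 2 μ))) (h_one : Lp.const 2 μ 1 ∈ V) : V = ⊤ := by
  have : CompleteSpace V := hVc.completeSpace_coe
  rw [← Submodule.orthogonal_eq_bot_iff, Submodule.eq_bot_iff]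
  exact fun f hf => Lp.eq_zero_of_forall_inner_walshLp_eq_zero fun S =>
    (Submodule.mem_orthogonal V f).mp hf _
      (walshMul_mem_of_forall_singleton_mem hV.walshMul_mem S h_one)

theorem eq_bot_or_eq_top [IsProbabilityMeasure μ] (hV : IsShiftWalshInvariant V)
    (hVc : IsClosed (V : Set (Lp ℂ 2 μ))) : V = ⊥ ∨ V = ⊤ := by
  have : CompleteSpace V := hVc.completeSpace_coe
  set v := V.starProjection (Lp.const 2 μ 1)
  have hv : v ∈ V := V.starProjection_apply_mem _
  have hw : Lp.const 2 μ 1 - v ∈ Vᗮ := Submodule.sub_starProjection_mem_orthogonal _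
  have hv_shift (k : ι) : shift (Pi.single k 1) v = v := by
    have hmem : shift (Pi.single k 1) v - v ∈ V ⊓ Vᗮ := by
      refine ⟨V.sub_mem (hV.shift_mem k v hv) hv, ?_⟩
      have h_eq : shift (Pi.single k 1) v - v =
          (Lp.const 2 μ 1 - v) - shift (Pi.single k 1) (Lp.const 2 μ 1 - v) := by
        rw [map_sub, shift_const]
        abel
      rw [h_eq]
      exact Vᗮ.sub_mem hw (hV.orthogonal.shift_mem k _ hw)
    rwa [Submodule.inf_orthogonal_eq_bot, Submodule.mem_bot, sub_eq_zero] at hmem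
  obtain ⟨c, hc⟩ := exists_eq_smul_const_of_forall_shift_eq hv_shift
  rcases eq_or_ne c 0 with rfl | hc0
  · left
    rw [← Submodule.orthogonal_eq_top_iff]
    refine hV.orthogonal.eq_top_of_const_mem V.isClosed_orthogonal ?_
    simpa [hc] using hw
  · right
    refine hV.eq_top_of_const_mem hVc ?_
    simpa [hc, smul_smul, hc0] using V.smul_mem c⁻¹ hv

end IsShiftWalshInvariant

end Invariant

def gwCSupport (k : ℕ) : Finset ℕ :=
  if k % 2 = 1 then ∅ else if k % 4 = 0 then {k + 2} else {k - 2}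

theorem gwC_eq_walsh (k : ℕ) (x : GWX) : gwC k x = walsh (gwCSupport k) x := by
  unfold gwC gwCSupport
  split_ifs <;> simp [walsh_singleton]

theorem gwSign_eq_neg_walsh (k : ℕ) (x : GWX) : gwSign k x = -walsh (Finset.range k) x := by
  rw [gwSign, walsh, Finset.prod_pow_eq_pow_sum, pow_succ, mul_neg_one]

theorem self_notMem_gwCSupport (k : ℕ) : k ∉ gwCSupport k := by
  unfold gwCSupport
  split_ifs <;> simp; omega

theorem gwDelta_eq_single (k : ℕ) : gwDelta k = Pi.single k 1 := by
  funext i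
  simp [gwDelta, Pi.single_apply]

section Representation

variable {μX : Measure GWX} {J J' : ℕ → Lp ℂ 2 μX → Lp ℂ 2 μX}

theorem coeFn_J_eq_walsh
    (hJ : ∀ k f, (↑(J k f) : GWX → ℂ) =ᵐ[μX] fun x =>
      gwSign k x * Complex.I * gwC k x * (↑f : GWX → ℂ) (x + gwDelta k))
    (k : ℕ) (f : Lp ℂ 2 μX) :
    J k f =ᵐ[μX] fun x => -(I * walsh (Finset.range k) x * walsh (gwCSupport k) x *
      f (x + Pi.single k 1)) := by
  filter_upwards [hJ k f] with x hx
  rw [hx, gwSign_eq_neg_walsh, gwC_eq_walsh, gwDelta_eq_single]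
  ring

variable [μX.IsAddRightInvariant] (hJ : ∀ k f, (↑(J k f) : GWX → ℂ) =ᵐ[μX] fun x =>
    gwSign k x * Complex.I * gwC k x * (↑f : GWX → ℂ) (x + gwDelta k))
include hJ

theorem J_J_eq_neg (k : ℕ) (f : Lp ℂ 2 μX) : J k (J k f) = -f := by
  refine Lp.ext ?_
  filter_upwards [coeFn_J_eq_walsh hJ k (J k f), Lp.coeFn_neg f,
    (measurePreserving_add_right μX _).quasiMeasurePreserving.ae_eq_comp
      (coeFn_J_eq_walsh hJ k f)] with x h₁ h₂ h₃
  simp only [Function.comp_apply] at h₃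
  rw [h₁, h₂, h₃, walsh_add_single_of_notMem Finset.notMem_range_self,
    walsh_add_single_of_notMem (self_notMem_gwCSupport k),
    add_add_self_of_zmod_two, Pi.neg_apply]
  linear_combination (I * I * walsh (gwCSupport k) x * walsh (gwCSupport k) x * f x) *
      walsh_mul_self (Finset.range k) x + (I * I * f x) * walsh_mul_self (gwCSupport k) x +
    f x * I_mul_I

theorem shift_eq_smul_walshMul_J (k : ℕ) (f : Lp ℂ 2 μX) :
    shift (Pi.single k 1) f =
      I • walshMul (Finset.range k) (walshMul (gwCSupport k) (J k f)) := by
  refine Lp.ext ?_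
  filter_upwards [coeFn_shift (Pi.single k 1) f, Lp.coeFn_smul I (walshMul (Finset.range k)
      (walshMul (gwCSupport k) (J k f))), coeFn_walshMul (Finset.range k)
      (walshMul (gwCSupport k) (J k f)), coeFn_walshMul (gwCSupport k) (J k f),
    coeFn_J_eq_walsh hJ k f] with x h₁ h₂ h₃ h₄ h₅
  rw [h₁, h₂, Pi.smul_apply, h₃, h₄, h₅, smul_eq_mul]
  linear_combination (I * I * walsh (gwCSupport k) x * walsh (gwCSupport k) x *
      f (x + Pi.single k 1)) * walsh_mul_self (Finset.range k) x +
    (I * I * f (x + Pi.single k 1)) * walsh_mul_self (gwCSupport k) x +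
    f (x + Pi.single k 1) * I_mul_I

variable (hJ' : ∀ k f, (↑(J' k f) : GWX → ℂ) =ᵐ[μX] fun x =>
    (-1 : ℂ) ^ (x k).val * Complex.I * (↑(J k f) : GWX → ℂ) x)
include hJ'

theorem walshMul_singleton_eq_smul_J'_J (k : ℕ) (f : Lp ℂ 2 μX) :
    walshMul {k} f = I • J' k (J k f) := by
  refine Lp.ext ?_
  filter_upwards [coeFn_walshMul {k} f, Lp.coeFn_smul I (J' k (J k f)), hJ' k (J k f),
    Lp.coeFn_neg f] with x h₁ h₂ h₃ h₄
  rw [h₁, h₂, Pi.smul_apply, h₃, J_J_eq_neg hJ, h₄, walsh_singleton, Pi.neg_apply, smul_eq_mul]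
  linear_combination ((-1) ^ (x k).val * f x) * I_mul_I

theorem isShiftWalshInvariant_of_forall_mem {V : Submodule ℂ (Lp ℂ 2 μX)}
    (hV : ∀ k : ℕ, ∀ f ∈ V, J k f ∈ V ∧ J' k f ∈ V) : IsShiftWalshInvariant V := by
  have hmul (k : ℕ) (f : Lp ℂ 2 μX) (hf : f ∈ V) : walshMul {k} f ∈ V := by
    rw [walshMul_singleton_eq_smul_J'_J hJ hJ']
    exact V.smul_mem _ (hV k _ (hV k f hf).1).2
  refine ⟨fun k f hf => ?_, hmul⟩
  rw [shift_eq_smul_walshMul_J hJ]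
  exact V.smul_mem _ (walshMul_mem_of_forall_singleton_mem hmul _
    (walshMul_mem_of_forall_singleton_mem hmul _ (hV k f hf).1))

end Representation

/-- with the `c_k` of Theorem 3.11 and `μ_X` the Haar probability measure on
`X` (characterized as a translation-invariant probability measure), the representation
`(J_k f)(x) = (-1)^{x_1+⋯+x_{k-1}+1} i c_k(x) f(x+δ_k)`,
`(J'_k f)(x) = (-1)^{x_k} i (J_k f)(x)` on `L²(X, μ_X; ℂ)` is irreducible over `ℂ`. -/
theorem gwC_representation_irreducible_complex
    (μX : Measure GWX) [IsProbabilityMeasure μX]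
    (hHaar : ∀ y : GWX, μX.map (· + y) = μX)
    (J J' : ℕ → Lp ℂ 2 μX → Lp ℂ 2 μX)
    (hJ : ∀ k f, (↑(J k f) : GWX → ℂ) =ᵐ[μX] fun x =>
      gwSign k x * Complex.I * gwC k x * (↑f : GWX → ℂ) (x + gwDelta k))
    (hJ' : ∀ k f, (↑(J' k f) : GWX → ℂ) =ᵐ[μX] fun x =>
      (-1 : ℂ) ^ (x k).val * Complex.I * (↑(J k f) : GWX → ℂ) x) :
    ∀ V : Submodule ℂ (Lp ℂ 2 μX), IsClosed (V : Set (Lp ℂ 2 μX)) →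
      (∀ k : ℕ, ∀ f ∈ V, J k f ∈ V ∧ J' k f ∈ V) →
      V = ⊥ ∨ V = ⊤ := by
  intro V hVc hVJ
  have : μX.IsAddRightInvariant := ⟨hHaar⟩
  exact (isShiftWalshInvariant_of_forall_mem hJ hJ' hVJ).eq_bot_or_eq_top hVc
end
end

section
/- Let c_k : X → ℂ be defined by c_k ≡ 1 for k even, c_{4ℓ+1}(x) = (−1)^{x_{4ℓ+3}} and c_{4ℓ+3}(x) = (−1)^{x_{4ℓ+1}} for ℓ ≥ 0, and define operators on L²(X, μ_X; ℂ) by (J_k f)(x) = (−1)^{x_1+⋯+x_{k−1}+1} · i · c_k(x) · f(x+δ_k) and (J'_k f)(x) = (−1)^{x_k} · i · (J_k f)(x). Then L²(X, μ_X)^ℝ := {f ∈ L²(X, μ_X; ℂ) : f(1−x) = conj(f(x)) for μ_X-a.e. x} is a closed real-linear subspace invariant under every J_k and every J'_k, and it is a real form: L²(X, μ_X)^ℝ ∩ i·L²(X, μ_X)^ℝ = {0} and L²(X, μ_X; ℂ) = L²(X, μ_X)^ℝ + i·L²(X, μ_X)^ℝ. -/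
/-!
Common setup: `GWX` is the compact abelian group `X = ∏_{k ≥ 1} {0,1}` of 0-1 sequences
(with componentwise addition mod 2 and the product σ-algebra, which is generated by the
sets `X_k = {x : x_k = 1}`).  The coordinate `i : ℕ` of `x : GWX` represents the paper's
coordinate `x_{i+1}`, so the Lean index `k : ℕ` corresponds to the paper's index `k + 1`
throughout; in particular the paper's sign `(-1)^k` becomes `(-1)^(k+1)` here.
-/

open MeasureTheory Complex Filter
open scoped ENNReal

noncomputable section

/-! Complementing, `x ↦ 1 - x = x + (1, 1, …)`, is a translation, so it preserves Haar measure and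
`T f = conj ∘ f ∘ (1 - ·)` is a conjugate-linear isometric involution of `L²`, whose fixed points
form `L²(X, μ_X)^ℝ`. The fixed points of any continuous conjugate-linear involution are a closed
real form: `f = (f + T f)/2 + i • (i (T f - f)/2)`, and `f = i g` with both fixed forces `f = -f`.
Invariance under `J_k` and `J'_k` reduces to `m (1 - x) = conj (m x)` for their multipliers `m`:
complementing changes the signs of `(-1)^{x_1 + ⋯ + x_{k-1}}`, `c_k` and `(-1)^{x_k}` by
`(-1)^{k-1}`, `(-1)^k` and `-1`, which compensates `conj i = -i`; and translation by `δ_k`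
commutes with complementing. -/

open Function

section RealForm

variable {E : Type*} [AddCommGroup E] [Module ℂ E] [Module ℝ E] [IsScalarTower ℝ ℂ E]
  (T : E →ₗ⋆[ℂ] E)

def fixedPointsSubmodule : Submodule ℝ E where
  carrier := fixedPoints T
  zero_mem' := map_zero T
  add_mem' {f g} hf hg := by simp only [mem_fixedPoints, IsFixedPt, map_add, hf.eq, hg.eq]
  smul_mem' r f hf := by
    rw [mem_fixedPoints, IsFixedPt, ← algebraMap_smul ℂ r f, map_smulₛₗ, hf.eq]
    simp

theorem mem_fixedPointsSubmodule {f : E} : f ∈ fixedPointsSubmodule T ↔ T f = f := Iff.rfl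

theorem isClosed_fixedPointsSubmodule [TopologicalSpace E] [T2Space E] (hT : Continuous T) :
    IsClosed (fixedPointsSubmodule T : Set E) :=
  isClosed_fixedPoints hT

theorem eq_zero_of_mem_fixedPointsSubmodule_of_eq_I_smul {f g : E}
    (hf : f ∈ fixedPointsSubmodule T) (hg : g ∈ fixedPointsSubmodule T) (hfg : f = I • g) :
    f = 0 := by
  rw [mem_fixedPointsSubmodule] at hf hg
  have hneg : T f = -f := by rw [hfg, map_smulₛₗ, hg, Complex.conj_I, neg_smul]
  have h2 : (2 : ℂ) • f = 0 := by rw [two_smul]; nth_rw 1 [← hf]; rw [hneg, neg_add_cancel]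
  exact (smul_eq_zero.mp h2).resolve_left two_ne_zero

theorem exists_mem_fixedPointsSubmodule_add_I_smul (hT : Involutive T) (f : E) :
    ∃ g ∈ fixedPointsSubmodule T, ∃ h ∈ fixedPointsSubmodule T, f = g + I • h := by
  refine ⟨(2⁻¹ : ℂ) • (f + T f), ?_, (2⁻¹ : ℂ) • I • (T f - f), ?_, ?_⟩
  · simp [mem_fixedPointsSubmodule, hT f, map_ofNat, add_comm]
  · simp [mem_fixedPointsSubmodule, hT f, map_ofNat, smul_sub, neg_add_eq_sub]
  · rw [smul_comm I, ← smul_assoc I I, smul_eq_mul, I_mul_I]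
    module

end RealForm

namespace MeasureTheory

variable {α β 𝕜 : Type*} [MeasurableSpace α] [MeasurableSpace β] {μ : Measure α} {ν : Measure β}
  [RCLike 𝕜]

theorem ae_comp_eq_conj_of_ae_eq_mul_comp {σ τ : α → α} (hσ : Measure.QuasiMeasurePreserving σ μ μ)
    (hτ : Measure.QuasiMeasurePreserving τ μ μ) (hστ : ∀ x, τ (σ x) = σ (τ x)) {a f g : α → 𝕜}
    (ha : ∀ x, a (σ x) = starRingEnd 𝕜 (a x)) (hf : ∀ᵐ x ∂μ, f (σ x) = starRingEnd 𝕜 (f x))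
    (hg : g =ᵐ[μ] fun x => a x * f (τ x)) :
    ∀ᵐ x ∂μ, g (σ x) = starRingEnd 𝕜 (g x) := by
  filter_upwards [hg, hσ.ae_eq_comp hg, hτ.ae hf] with x hgx hgσx hfτx
  simp only [comp_apply] at hgσx
  rw [hgσx, hgx, hστ, hfτx, ha, map_mul]

namespace Lp

variable {p : ENNReal} [Fact (1 ≤ p)]

def starₗᵢ : Lp 𝕜 p μ →ₗᵢ⋆[𝕜] Lp 𝕜 p μ where
  toFun := star
  map_add' f g := by
    ext1
    filter_upwards [coeFn_star (f + g), coeFn_star f, coeFn_star g, coeFn_add f g,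
      coeFn_add (star f) (star g)] with x hsum hf hg hadd hadd'
    simp_all
  map_smul' c f := by
    ext1
    filter_upwards [coeFn_star (c • f), coeFn_star f, coeFn_smul c f,
      coeFn_smul (starRingEnd 𝕜 c) (star f)] with x hcf hf hsmul hsmul'
    simp_all
  norm_map' f := by
    simp only [LinearMap.coe_mk, AddHom.coe_mk, norm_def]
    rw [eLpNorm_congr_ae (coeFn_star f), eLpNorm_star]

def conjCompMeasurePreserving (σ : α → β) (hσ : MeasurePreserving σ μ ν) :
    Lp 𝕜 p ν →ₗᵢ⋆[𝕜] Lp 𝕜 p μ :=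
  starₗᵢ.comp (compMeasurePreservingₗᵢ 𝕜 σ hσ)

theorem coeFn_conjCompMeasurePreserving {σ : α → β} (hσ : MeasurePreserving σ μ ν)
    (f : Lp 𝕜 p ν) :
    conjCompMeasurePreserving σ hσ f =ᵐ[μ] fun x => starRingEnd 𝕜 (f (σ x)) := by
  filter_upwards [coeFn_star (compMeasurePreserving σ hσ f),
    coeFn_compMeasurePreserving f hσ] with x h₁ h₂
  rw [Pi.star_apply, h₂] at h₁
  exact h₁

variable {σ : α → α} (hσ : MeasurePreserving σ μ μ)

theorem isFixedPt_conjCompMeasurePreserving_iff (f : Lp 𝕜 p μ) :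
    IsFixedPt (conjCompMeasurePreserving σ hσ) f ↔ ∀ᵐ x ∂μ, f (σ x) = starRingEnd 𝕜 (f x) := by
  rw [IsFixedPt, Lp.ext_iff]
  constructor <;> intro h <;>
    filter_upwards [coeFn_conjCompMeasurePreserving hσ f, h] with x h₁ h₂
  · rw [← h₂, h₁, RCLike.conj_conj]
  · rw [h₁, h₂, RCLike.conj_conj]

theorem involutive_conjCompMeasurePreserving (hσ' : Involutive σ) :
    Involutive (conjCompMeasurePreserving (𝕜 := 𝕜) (p := p) σ hσ) := by
  intro f
  ext1
  filter_upwards [coeFn_conjCompMeasurePreserving hσ (conjCompMeasurePreserving σ hσ f),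
    hσ.quasiMeasurePreserving.ae_eq_comp (coeFn_conjCompMeasurePreserving hσ f)] with x h₁ h₂
  simp only [comp_apply] at h₂
  rw [h₁, h₂, hσ' x, RCLike.conj_conj]

end Lp

end MeasureTheory

theorem neg_one_pow_val_one_sub {R : Type*} [Ring R] (a : ZMod 2) :
    (-1 : R) ^ (1 - a).val = -(-1) ^ a.val := by
  fin_cases a
  · change (-1 : R) ^ 1 = -(-1) ^ 0
    simp
  · change (-1 : R) ^ 0 = -(-1) ^ 1
    simp

theorem gwFlip_eq_add_one (x : GWX) : gwFlip x = x + 1 := by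
  funext i
  simp [gwFlip, sub_eq_add_neg, ZMod.neg_eq_self_mod_two, add_comm]

theorem gwFlip_add (x y : GWX) : gwFlip (x + y) = gwFlip x + y := by
  simp only [gwFlip_eq_add_one, add_right_comm]

theorem gwFlip_involutive : Involutive gwFlip :=
  fun x => funext fun i => sub_sub_cancel 1 (x i)

theorem gwSign_gwFlip (k : ℕ) (x : GWX) : gwSign k (gwFlip x) = (-1) ^ k * gwSign k x := by
  simp only [gwSign, gwFlip, pow_succ, ← Finset.prod_pow_eq_pow_sum, neg_one_pow_val_one_sub,
    Finset.prod_neg, Finset.card_range]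
  ring

theorem gwC_gwFlip (k : ℕ) (x : GWX) : gwC k (gwFlip x) = (-1) ^ (k + 1) * gwC k x := by
  rcases Nat.even_or_odd k with hk | hk
  · have hk2 : k % 2 ≠ 1 := by rw [Nat.even_iff.mp hk]; decide
    simp only [gwC, hk2, if_false, hk.add_one.neg_one_pow, gwFlip]
    split_ifs <;> simp [neg_one_pow_val_one_sub]
  · simp [gwC, Nat.odd_iff.mp hk, hk.add_one.neg_one_pow]

theorem conj_gwSign (k : ℕ) (x : GWX) : starRingEnd ℂ (gwSign k x) = gwSign k x := by
  simp [gwSign]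

theorem conj_gwC (k : ℕ) (x : GWX) : starRingEnd ℂ (gwC k x) = gwC k x := by
  unfold gwC
  split_ifs <;> simp

theorem gwJ_multiplier_gwFlip (k : ℕ) (x : GWX) :
    gwSign k (gwFlip x) * I * gwC k (gwFlip x) = starRingEnd ℂ (gwSign k x * I * gwC k x) := by
  have h : (-1 : ℂ) ^ k * (-1) ^ (k + 1) = -1 := by
    rw [← pow_add]; exact Odd.neg_one_pow ⟨k, by ring⟩
  rw [gwSign_gwFlip, gwC_gwFlip, map_mul, map_mul, conj_gwSign, conj_gwC, conj_I]
  linear_combination gwSign k x * I * gwC k x * h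

theorem gwJ'_multiplier_gwFlip (k : ℕ) (x : GWX) :
    (-1 : ℂ) ^ (gwFlip x k).val * I = starRingEnd ℂ ((-1) ^ (x k).val * I) := by
  simp [gwFlip, neg_one_pow_val_one_sub]

theorem gwC_real_form_general
    (μX : Measure GWX)
    (hHaar : ∀ y : GWX, μX.map (· + y) = μX)
    (J J' : ℕ → Lp ℂ 2 μX → Lp ℂ 2 μX)
    (hJ : ∀ k f, (↑(J k f) : GWX → ℂ) =ᵐ[μX] fun x =>
      gwSign k x * Complex.I * gwC k x * (↑f : GWX → ℂ) (x + gwDelta k))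
    (hJ' : ∀ k f, (↑(J' k f) : GWX → ℂ) =ᵐ[μX] fun x =>
      (-1 : ℂ) ^ (x k).val * Complex.I * (↑(J k f) : GWX → ℂ) x)
    (HR : Set (Lp ℂ 2 μX))
    (hHR : HR = {f : Lp ℂ 2 μX | ∀ᵐ x ∂μX,
      (↑f : GWX → ℂ) (gwFlip x) = (starRingEnd ℂ) ((↑f : GWX → ℂ) x)}) :
    IsClosed HR ∧
    (0 : Lp ℂ 2 μX) ∈ HR ∧
    (∀ f ∈ HR, ∀ g ∈ HR, f + g ∈ HR) ∧
    (∀ (r : ℝ), ∀ f ∈ HR, r • f ∈ HR) ∧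
    (∀ k : ℕ, ∀ f ∈ HR, J k f ∈ HR ∧ J' k f ∈ HR) ∧
    (∀ f ∈ HR, (∃ g ∈ HR, f = Complex.I • g) → f = 0) ∧
    (∀ f : Lp ℂ 2 μX, ∃ g ∈ HR, ∃ h ∈ HR, f = g + Complex.I • h) := by
  have hadd (y : GWX) : MeasurePreserving (· + y) μX μX := ⟨measurable_add_const y, hHaar y⟩
  have hflip : MeasurePreserving gwFlip μX μX := by
    simpa only [← funext gwFlip_eq_add_one] using hadd 1
  set T := Lp.conjCompMeasurePreserving (𝕜 := ℂ) (p := 2) gwFlip hflip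
  have hT (f : Lp ℂ 2 μX) : f ∈ fixedPointsSubmodule T.toLinearMap ↔
      ∀ᵐ x ∂μX, f (gwFlip x) = starRingEnd ℂ (f x) :=
    Lp.isFixedPt_conjCompMeasurePreserving_iff hflip f
  obtain rfl : HR = fixedPointsSubmodule T.toLinearMap := by
    rw [hHR]
    exact Set.ext fun f => (hT f).symm
  refine ⟨isClosed_fixedPointsSubmodule _ T.continuous, zero_mem _, fun f hf g hg => add_mem hf hg,
    fun r f hf => Submodule.smul_mem _ r hf, fun k f hf => ?_,
    fun f hf ⟨g, hg, hfg⟩ => eq_zero_of_mem_fixedPointsSubmodule_of_eq_I_smul _ hf hg hfg,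
    exists_mem_fixedPointsSubmodule_add_I_smul _
      (Lp.involutive_conjCompMeasurePreserving hflip gwFlip_involutive)⟩
  have hJf := ae_comp_eq_conj_of_ae_eq_mul_comp hflip.quasiMeasurePreserving
    (hadd (gwDelta k)).quasiMeasurePreserving (fun x => (gwFlip_add x _).symm)
    (gwJ_multiplier_gwFlip k) ((hT f).mp hf) (hJ k f)
  exact ⟨(hT _).mpr hJf, (hT _).mpr <| ae_comp_eq_conj_of_ae_eq_mul_comp
    hflip.quasiMeasurePreserving (.id μX) (fun _ => rfl) (gwJ'_multiplier_gwFlip k) hJf (hJ' k f)⟩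

/-- with the `c_k` of Theorem 3.11 and `μ_X` the Haar probability measure on
`X` (characterized as a translation-invariant probability measure), the set
`L²(X, μ_X)^ℝ = {f : f(1-x) = conj(f(x)) a.e.}` is a closed real subspace of
`L²(X, μ_X; ℂ)`, invariant under every `J_k` and `J'_k`, and is a real form:
`L²ℝ ∩ i L²ℝ = {0}` and `L² = L²ℝ + i L²ℝ`. -/
theorem gwC_real_form
    (μX : Measure GWX) [IsProbabilityMeasure μX]
    (hHaar : ∀ y : GWX, μX.map (· + y) = μX)
    (J J' : ℕ → Lp ℂ 2 μX → Lp ℂ 2 μX)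
    (hJ : ∀ k f, (↑(J k f) : GWX → ℂ) =ᵐ[μX] fun x =>
      gwSign k x * Complex.I * gwC k x * (↑f : GWX → ℂ) (x + gwDelta k))
    (hJ' : ∀ k f, (↑(J' k f) : GWX → ℂ) =ᵐ[μX] fun x =>
      (-1 : ℂ) ^ (x k).val * Complex.I * (↑(J k f) : GWX → ℂ) x)
    (HR : Set (Lp ℂ 2 μX))
    (hHR : HR = {f : Lp ℂ 2 μX | ∀ᵐ x ∂μX,
      (↑f : GWX → ℂ) (gwFlip x) = (starRingEnd ℂ) ((↑f : GWX → ℂ) x)}) :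
    IsClosed HR ∧
    (0 : Lp ℂ 2 μX) ∈ HR ∧
    (∀ f ∈ HR, ∀ g ∈ HR, f + g ∈ HR) ∧
    (∀ (r : ℝ), ∀ f ∈ HR, r • f ∈ HR) ∧
    (∀ k : ℕ, ∀ f ∈ HR, J k f ∈ HR ∧ J' k f ∈ HR) ∧
    (∀ f ∈ HR, (∃ g ∈ HR, f = Complex.I • g) → f = 0) ∧
    (∀ f : Lp ℂ 2 μX, ∃ g ∈ HR, ∃ h ∈ HR, f = g + Complex.I • h) :=
  gwC_real_form_general μX hHaar J J' hJ hJ' HR hHR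
end
end

section
/- Let c_k : X → ℂ be defined by c_k ≡ 1 for k even, c_{4ℓ+1}(x) = (−1)^{x_{4ℓ+3}} and c_{4ℓ+3}(x) = (−1)^{x_{4ℓ+1}} for ℓ ≥ 0, define operators on L²(X, μ_X; ℂ) by (J_k f)(x) = (−1)^{x_1+⋯+x_{k−1}+1} · i · c_k(x) · f(x+δ_k) and (J'_k f)(x) = (−1)^{x_k} · i · (J_k f)(x), and let L²(X, μ_X)^ℝ := {f ∈ L²(X, μ_X; ℂ) : f(1−x) = conj(f(x)) for μ_X-a.e. x}, a real Hilbert space invariant under every J_k and J'_k. Then there is no bounded ℝ-linear map T : L²(X, μ_X)^ℝ → L²(X, μ_X)^ℝ with T² = −id that preserves the real inner product Re⟨·,·⟩ and commutes with the restriction of J_k and of J'_k for every k ≥ 1. Consequently, the real representation on L²(X, μ_X)^ℝ does not arise by restriction of scalars from any complex representation of the complexified Clifford algebra. -/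
/-!
Common setup: `GWX` is the compact abelian group `X = ∏_{k ≥ 1} {0,1}` of 0-1 sequences
(with componentwise addition mod 2 and the product σ-algebra, which is generated by the
sets `X_k = {x : x_k = 1}`).  The coordinate `i : ℕ` of `x : GWX` represents the paper's
coordinate `x_{i+1}`, so the Lean index `k : ℕ` corresponds to the paper's index `k + 1`
throughout; in particular the paper's sign `(-1)^k` becomes `(-1)^(k+1)` here.
-/

open MeasureTheory Complex Filter
open scoped ENNReal

noncomputable section

/-!
Each `J_j J'_j` is multiplication by `i (-1)^{x_j}`, and the multiplier of `J_k` is, up to a real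
sign, a product of such factors; so `J_k 1 = ± ∏_{j ∈ l} J_j J'_j 1`. Applying `T`, which commutes
with all these operators and with real scalars, gives `J_k w = ± ∏_{j ∈ l} J_j J'_j w` for
`w = T 1`, and comparing both sides pointwise shows that `w` is invariant under translation by
every `δ_k`. Such a function is a.e. constant (the translations by the `δ_k` act ergodically on
Haar measure), the constant is real because `w` lies in the real form, and so `T (T 1) = w² · 1`
cannot be `-1`.
-/

open SymbolicDynamics

namespace SymbolicDynamics.FullShift

variable {ι A : Type*}

theorem isPiSystem_setOf_cylinder : IsPiSystem {S : Set (ι → A) | ∃ s x, S = cylinder s x} := by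
  classical
  rintro _ ⟨s, x, rfl⟩ _ ⟨t, y, rfl⟩ ⟨z, hzs, hzt⟩
  refine ⟨s ∪ t, z, Set.ext fun w =>
    ⟨fun ⟨hs, ht⟩ i hi => ?_, fun h => ⟨fun i hi => ?_, fun i hi => ?_⟩⟩⟩
  · rcases Finset.mem_union.1 hi with hi | hi
    · exact (hs i hi).trans (hzs i hi).symm
    · exact (ht i hi).trans (hzt i hi).symm
  · exact (h i (Finset.mem_union_left t hi)).trans (hzs i hi)
  · exact (h i (Finset.mem_union_right s hi)).trans (hzt i hi)

variable [MeasurableSpace A] [MeasurableSingletonClass A]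

theorem measurableSet_cylinder (s : Finset ι) (x : ι → A) : MeasurableSet (cylinder s x) := by
  rw [cylinder_eq_set_pi]
  exact .pi s.countable_toSet fun i _ => measurableSet_singleton (x i)

theorem generateFrom_setOf_cylinder [Countable A] :
    MeasurableSpace.generateFrom {S : Set (ι → A) | ∃ s x, S = cylinder s x} =
      MeasurableSpace.pi := by
  refine le_antisymm (MeasurableSpace.generateFrom_le ?_) (iSup_le fun i => ?_)
  · rintro _ ⟨s, x, rfl⟩
    exact measurableSet_cylinder s x
  · refine Measurable.comap_le
      (@measurable_to_countable' _ _ _ _ (MeasurableSpace.generateFrom _) _ fun a => ?_)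
    refine MeasurableSpace.measurableSet_generateFrom ⟨{i}, fun _ => a, ?_⟩
    ext x
    simp [mem_cylinder]

end SymbolicDynamics.FullShift

theorem MeasureTheory.Integrable.ae_eq_zero_of_forall_setIntegral_isPiSystem {α E : Type*}
    [mα : MeasurableSpace α] {μ : Measure α} [NormedAddCommGroup E] [NormedSpace ℝ E]
    [CompleteSpace E] {C : Set (Set α)} (hgen : mα = MeasurableSpace.generateFrom C)
    (hC : IsPiSystem C) {f : α → E} (hf : Integrable f μ)
    (hfC : ∀ s ∈ C, ∫ x in s, f x ∂μ = 0) (hf_univ : ∫ x, f x ∂μ = 0) : f =ᵐ[μ] 0 := by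
  rw [← hf.withDensityᵥ_eq_iff (integrable_zero α E μ), withDensityᵥ_zero]
  refine VectorMeasure.ext_of_generateFrom C (fun s hs => ?_) hgen hC ?_
  · rw [withDensityᵥ_apply hf (hgen ▸ MeasurableSpace.measurableSet_generateFrom hs), hfC s hs]
    rfl
  · rw [withDensityᵥ_apply hf .univ, setIntegral_univ, hf_univ]
    rfl

theorem MeasureTheory.Lp.const_injective {α E : Type*} [MeasurableSpace α] {μ : Measure α}
    [IsFiniteMeasure μ] [NeZero μ] [NormedAddCommGroup E] (p : ℝ≥0∞) :
    Function.Injective (Lp.const p μ : E → Lp E p μ) := by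
  intro a b h
  have hab : Function.const α a =ᵐ[μ] Function.const α b :=
    (Lp.coeFn_const p μ a).symm.trans (by rw [h]; exact Lp.coeFn_const p μ b)
  exact hab.exists.choose_spec

theorem MeasureTheory.Lp.smul_const {α E 𝕜 : Type*} [MeasurableSpace α] {μ : Measure α}
    [IsFiniteMeasure μ] [NormedAddCommGroup E] [NormedRing 𝕜] [Module 𝕜 E] [IsBoundedSMul 𝕜 E]
    (p : ℝ≥0∞) (a : 𝕜) (c : E) : a • Lp.const p μ c = Lp.const p μ (a • c) :=
  ((Lp.constₗ p μ 𝕜).map_smul a c).symm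

theorem MeasureTheory.ae_eq_comp_add_right {G β : Type*} [MeasurableSpace G] [Add G]
    [MeasurableAdd G] {μ : Measure G} [μ.IsAddRightInvariant] (y : G) {f g : G → β}
    (h : f =ᵐ[μ] g) :
    (fun x => f (x + y)) =ᵐ[μ] fun x => g (x + y) :=
  (measurePreserving_add_right μ y).quasiMeasurePreserving.ae_eq_comp h

section Ergodicity

variable {ι E : Type*} [DecidableEq ι] [NormedAddCommGroup E] [NormedSpace ℝ E]
  {μ : Measure (ι → ZMod 2)} [μ.IsAddRightInvariant]

/-- Translating by `δ_j` swaps the two halves into which fixing `x_j` cuts a cylinder, so each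
half carries half of the integral of an invariant function. -/
theorem setIntegral_cylinder_eq_zero_of_forall_ae_eq_add_single {u : (ι → ZMod 2) → E}
    (hu : Integrable u μ) (hinv : ∀ k, (fun x => u (x + Pi.single k 1)) =ᵐ[μ] u)
    (hu_univ : ∫ x, u x ∂μ = 0) (s : Finset ι) (e : ι → ZMod 2) :
    ∫ x in FullShift.cylinder s e, u x ∂μ = 0 := by
  induction s using Finset.induction_on generalizing e with
  | empty => simpa [FullShift.cylinder] using hu_univ
  | insert j s hj ih =>
    set A := FullShift.cylinder (insert j s) e
    have hA : MeasurableSet A := FullShift.measurableSet_cylinder _ e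
    have hsplit : FullShift.cylinder s e = A ∪ (· + Pi.single j 1) ⁻¹' A := by
      ext x
      have hxj : ∀ a b : ZMod 2, a = b ∨ a + 1 = b := by decide
      have hs : ∀ i ∈ s, x i + (Pi.single j 1 : ι → ZMod 2) i = x i := fun i hi => by
        simp [ne_of_mem_of_not_mem hi hj]
      simp only [A, Set.mem_union, Set.mem_preimage, FullShift.mem_cylinder,
        Finset.forall_mem_insert, Pi.add_apply, Pi.single_eq_same]
      constructor
      · intro h
        rcases hxj (x j) (e j) with hj' | hj'
        exacts [.inl ⟨hj', h⟩, .inr ⟨hj', fun i hi => (hs i hi).trans (h i hi)⟩]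
      · rintro (⟨-, h⟩ | ⟨-, h⟩) i hi
        exacts [h i hi, (hs i hi).symm.trans (h i hi)]
    have hdisj : Disjoint A ((· + Pi.single j 1) ⁻¹' A) := by
      refine Set.disjoint_left.2 fun x hx hx' => ?_
      have := (hx' j (Finset.mem_insert_self j s)).trans (hx j (Finset.mem_insert_self j s)).symm
      simp at this
    have htrans : ∫ x in (· + Pi.single j 1) ⁻¹' A, u x ∂μ = ∫ x in A, u x ∂μ := by
      rw [← (measurePreserving_add_right μ _).setIntegral_preimage_emb
        (MeasurableEquiv.addRight _).measurableEmbedding u A]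
      exact setIntegral_congr_ae (measurable_add_const _ hA) ((hinv j).mono fun x hx _ => hx.symm)
    have h2 : ∫ x in A, u x ∂μ + ∫ x in A, u x ∂μ = 0 := by
      rw [← ih e, hsplit, setIntegral_union hdisj (measurable_add_const _ hA) hu.integrableOn
        hu.integrableOn, htrans]
    rwa [← two_smul ℝ, smul_eq_zero, or_iff_right two_ne_zero] at h2

theorem ae_eq_integral_of_forall_ae_eq_add_single [CompleteSpace E] [IsProbabilityMeasure μ]
    {w : (ι → ZMod 2) → E} (hw : Integrable w μ)
    (hinv : ∀ k, (fun x => w (x + Pi.single k 1)) =ᵐ[μ] w) :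
    w =ᵐ[μ] fun _ => ∫ x, w x ∂μ := by
  set u := fun x => w x - ∫ y, w y ∂μ
  have hu : Integrable u μ := hw.sub (integrable_const _)
  have hu_univ : ∫ x, u x ∂μ = 0 := by simp [u, integral_sub hw (integrable_const _)]
  have hu_inv : ∀ k, (fun x => u (x + Pi.single k 1)) =ᵐ[μ] u := fun k =>
    (hinv k).mono fun x hx => by simp only [u, hx]
  have hu_zero : u =ᵐ[μ] 0 :=
    hu.ae_eq_zero_of_forall_setIntegral_isPiSystem FullShift.generateFrom_setOf_cylinder.symm
      FullShift.isPiSystem_setOf_cylinder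
      (by rintro _ ⟨s, e, rfl⟩
          exact setIntegral_cylinder_eq_zero_of_forall_ae_eq_add_single hu hu_inv hu_univ s e)
      hu_univ
  filter_upwards [hu_zero] with x hx using sub_eq_zero.1 hx

end Ergodicity

namespace GWX

theorem gwDelta_eq_single (k : ℕ) : gwDelta k = Pi.single k 1 := by
  ext i
  simp [gwDelta, Pi.single_apply]

theorem gwFlip_eq_add_one (x : GWX) : gwFlip x = x + 1 :=
  funext fun i => (show ∀ a : ZMod 2, 1 - a = a + 1 by decide) (x i)

theorem add_gwDelta_self (x : GWX) (k : ℕ) : (x + gwDelta k) k = x k + 1 := by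
  simp [gwDelta]

theorem add_gwDelta_add_gwDelta (x : GWX) (k : ℕ) : x + gwDelta k + gwDelta k = x := by
  rw [add_assoc, CharTwo.add_self_eq_zero, add_zero]

theorem neg_one_pow_val_add_one (a : ZMod 2) : (-1 : ℂ) ^ (a + 1).val = -(-1) ^ a.val := by
  fin_cases a
  · show (-1 : ℂ) ^ 1 = -(-1) ^ 0
    norm_num
  · show (-1 : ℂ) ^ 0 = -(-1) ^ 1
    norm_num

def walsh (l : List ℕ) (x : GWX) : ℂ := (l.map fun j => (-1 : ℂ) ^ (x j).val).prod

@[simp]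
theorem walsh_nil (x : GWX) : walsh [] x = 1 := rfl

@[simp]
theorem walsh_cons (j : ℕ) (l : List ℕ) (x : GWX) :
    walsh (j :: l) x = (-1) ^ (x j).val * walsh l x := rfl

theorem walsh_append (l l' : List ℕ) (x : GWX) : walsh (l ++ l') x = walsh l x * walsh l' x := by
  simp [walsh]

theorem walsh_mul_self (l : List ℕ) (x : GWX) : walsh l x * walsh l x = 1 := by
  induction l with
  | nil => simp
  | cons j l ih =>
    rw [walsh_cons, mul_mul_mul_comm, ← pow_add, ← two_mul, pow_mul, neg_one_sq, one_pow, one_mul,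
      ih]

theorem walsh_add_one (l : List ℕ) (x : GWX) : walsh l (x + 1) = (-1) ^ l.length * walsh l x := by
  induction l with
  | nil => simp
  | cons j l ih =>
    rw [walsh_cons, walsh_cons, ih, Pi.add_apply, Pi.one_apply, neg_one_pow_val_add_one,
      List.length_cons, pow_succ]
    ring

theorem walsh_add_gwDelta {k : ℕ} {l : List ℕ} (hk : k ∉ l) (x : GWX) :
    walsh l (x + gwDelta k) = walsh l x := by
  induction l with
  | nil => rfl
  | cons j l ih =>
    rw [List.mem_cons, not_or] at hk
    simp [gwDelta, Ne.symm hk.1, ih hk.2]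

theorem conj_walsh (l : List ℕ) (x : GWX) : starRingEnd ℂ (walsh l x) = walsh l x := by
  induction l with
  | nil => simp
  | cons j l ih => simp [ih]

theorem gwSign_eq_neg_walsh_range (k : ℕ) (x : GWX) : gwSign k x = -walsh (List.range k) x := by
  induction k with
  | zero => simp [gwSign]
  | succ k ih =>
    rw [List.range_succ, walsh_append, ← neg_mul, ← ih]
    simp [gwSign, Finset.sum_range_succ, pow_add]

theorem exists_gwC_eq_walsh (k : ℕ) :
    ∃ l : List ℕ, Odd (l.length + k) ∧ k ∉ l ∧ ∀ x, gwC k x = walsh l x := by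
  unfold gwC
  split_ifs with h2 h4
  · exact ⟨[], by simpa [Nat.odd_iff] using h2, by simp, fun x => by simp⟩
  · refine ⟨[k + 2], Nat.odd_iff.2 ?_, by simp, fun x => by simp⟩
    simp only [List.length_singleton]
    omega
  · refine ⟨[k - 2], Nat.odd_iff.2 ?_, ?_, fun x => by simp⟩
    · simp only [List.length_singleton]
      omega
    · simp only [List.mem_singleton]
      omega

/-- The multiplier of `J_k`: `(J_k f)(x) = jCoeff k x * f (x + δ_k)`. -/
def jCoeff (k : ℕ) (x : GWX) : ℂ := gwSign k x * I * gwC k x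

theorem exists_jCoeff_eq_neg_I_mul_walsh (k : ℕ) :
    ∃ l : List ℕ, Odd l.length ∧ k ∉ l ∧ ∀ x, jCoeff k x = -I * walsh l x := by
  obtain ⟨l, hodd, hk, hl⟩ := exists_gwC_eq_walsh k
  refine ⟨l ++ List.range k, by simpa using hodd, by simp [hk], fun x => ?_⟩
  rw [jCoeff, gwSign_eq_neg_walsh_range, hl, walsh_append]
  ring

theorem jCoeff_add_gwDelta (k : ℕ) (x : GWX) : jCoeff k (x + gwDelta k) = jCoeff k x := by
  obtain ⟨l, -, hk, hl⟩ := exists_jCoeff_eq_neg_I_mul_walsh k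
  rw [hl, hl, walsh_add_gwDelta hk]

theorem jCoeff_mul_self (k : ℕ) (x : GWX) : jCoeff k x * jCoeff k x = -1 := by
  obtain ⟨l, -, -, hl⟩ := exists_jCoeff_eq_neg_I_mul_walsh k
  rw [hl]
  linear_combination (walsh l x * walsh l x) * I_sq - walsh_mul_self l x

theorem jCoeff_ne_zero (k : ℕ) (x : GWX) : jCoeff k x ≠ 0 :=
  left_ne_zero_of_mul (by rw [jCoeff_mul_self]; exact neg_ne_zero.2 one_ne_zero)

theorem jCoeff_gwFlip (k : ℕ) (x : GWX) : jCoeff k (gwFlip x) = starRingEnd ℂ (jCoeff k x) := by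
  obtain ⟨l, hodd, -, hl⟩ := exists_jCoeff_eq_neg_I_mul_walsh k
  rw [hl, hl, gwFlip_eq_add_one, walsh_add_one, hodd.neg_one_pow, map_mul, conj_walsh, map_neg,
    conj_I]
  ring

theorem exists_neg_I_eq_real_mul_I_pow {n : ℕ} (hn : Odd n) : ∃ ε : ℝ, -I = ε * I ^ n := by
  obtain ⟨m, rfl⟩ := hn
  refine ⟨-(-1) ^ m, ?_⟩
  rw [pow_succ, pow_mul, I_sq]
  push_cast
  rw [neg_mul, ← mul_assoc, ← mul_pow, neg_one_mul, neg_neg, one_pow, one_mul]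

theorem exists_jCoeff_eq_real_mul_I_pow_mul_walsh (k : ℕ) :
    ∃ (l : List ℕ) (ε : ℝ), ∀ x, jCoeff k x = ε * (I ^ l.length * walsh l x) := by
  obtain ⟨l, hodd, -, hl⟩ := exists_jCoeff_eq_neg_I_mul_walsh k
  obtain ⟨ε, hε⟩ := exists_neg_I_eq_real_mul_I_pow hodd
  exact ⟨l, ε, fun x => by rw [hl, hε, mul_assoc]⟩

end GWX

/-- Each factor `J_j J'_j` acts as multiplication by `I (-1)^{x_j}` (`GWX.coeFn_J_J'`). -/
def walshOp {E : Type*} (J J' : ℕ → E → E) (l : List ℕ) (f : E) : E :=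
  l.foldr (fun j g => J j (J' j g)) f

section walshOp

variable {E : Type*} {J J' : ℕ → E → E} {S : Set E}

theorem walshOp_mem (hJ : ∀ k, Set.MapsTo (J k) S S) (hJ' : ∀ k, Set.MapsTo (J' k) S S)
    (l : List ℕ) {f : E} (hf : f ∈ S) : walshOp J J' l f ∈ S := by
  induction l with
  | nil => exact hf
  | cons j l ih => exact hJ j (hJ' j ih)

theorem map_walshOp (hJ : ∀ k, Set.MapsTo (J k) S S) (hJ' : ∀ k, Set.MapsTo (J' k) S S)
    {T : E → E} (hT : ∀ k, ∀ f ∈ S, T (J k f) = J k (T f) ∧ T (J' k f) = J' k (T f))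
    (l : List ℕ) {f : E} (hf : f ∈ S) : T (walshOp J J' l f) = walshOp J J' l (T f) := by
  induction l with
  | nil => rfl
  | cons j l ih =>
    have hl := walshOp_mem hJ hJ' l hf
    show T (J j (J' j (walshOp J J' l f))) = J j (J' j (walshOp J J' l (T f)))
    rw [(hT j _ (hJ' j hl)).1, (hT j _ hl).2, ih]

end walshOp

namespace GWX

def realForm (μ : Measure GWX) : Set (Lp ℂ 2 μ) :=
  {f | ∀ᵐ x ∂μ, (↑f : GWX → ℂ) (gwFlip x) = (starRingEnd ℂ) ((↑f : GWX → ℂ) x)}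

variable {μ : Measure GWX} [μ.IsAddRightInvariant]

theorem ae_eq_comp_gwFlip {f g : GWX → ℂ} (h : f =ᵐ[μ] g) :
    (fun x => f (gwFlip x)) =ᵐ[μ] fun x => g (gwFlip x) := by
  simpa only [gwFlip_eq_add_one] using ae_eq_comp_add_right 1 h

theorem const_mem_realForm_iff [IsFiniteMeasure μ] [NeZero μ] (c : ℂ) :
    Lp.const 2 μ c ∈ realForm μ ↔ starRingEnd ℂ c = c := by
  have hc := Lp.coeFn_const 2 μ c
  have h : ∀ᵐ x ∂μ, ((Lp.const 2 μ c : GWX → ℂ) (gwFlip x) =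
      starRingEnd ℂ ((Lp.const 2 μ c : GWX → ℂ) x) ↔ starRingEnd ℂ c = c) := by
    filter_upwards [hc, ae_eq_comp_gwFlip hc] with x h1 h2
    rw [h1, h2, eq_comm]
    rfl
  exact (Filter.eventually_congr h).trans Filter.eventually_const

theorem exists_eq_const_of_forall_ae_eq_add_gwDelta [IsProbabilityMeasure μ] (f : Lp ℂ 2 μ)
    (hf : ∀ k, (fun x => f (x + gwDelta k)) =ᵐ[μ] f) : ∃ c, f = Lp.const 2 μ c := by
  refine ⟨∫ x, f x ∂μ, Lp.ext ?_⟩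
  refine (ae_eq_integral_of_forall_ae_eq_add_single ((Lp.memLp f).integrable one_le_two)
    fun k => ?_).trans (Lp.coeFn_const 2 μ _).symm
  simpa only [gwDelta_eq_single] using hf k

variable {J J' : ℕ → Lp ℂ 2 μ → Lp ℂ 2 μ}
  (hJ : ∀ k f, (↑(J k f) : GWX → ℂ) =ᵐ[μ] fun x => jCoeff k x * (↑f : GWX → ℂ) (x + gwDelta k))
  (hJ' : ∀ k f, (↑(J' k f) : GWX → ℂ) =ᵐ[μ] fun x =>
    (-1 : ℂ) ^ (x k).val * I * (↑(J k f) : GWX → ℂ) x)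
include hJ

theorem mapsTo_J_realForm (k : ℕ) : Set.MapsTo (J k) (realForm μ) (realForm μ) := by
  intro f (hf : ∀ᵐ x ∂μ, _)
  show ∀ᵐ x ∂μ, _
  filter_upwards [ae_eq_comp_gwFlip (hJ k f), ae_eq_comp_add_right (gwDelta k) hf, hJ k f]
    with x h1 h2 h3
  have hflip : gwFlip x + gwDelta k = gwFlip (x + gwDelta k) := by
    simp only [gwFlip_eq_add_one, add_right_comm]
  rw [h1, h3, hflip, h2, jCoeff_gwFlip, map_mul]

include hJ'

theorem mapsTo_J'_realForm (k : ℕ) : Set.MapsTo (J' k) (realForm μ) (realForm μ) := by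
  intro f hf
  show ∀ᵐ x ∂μ, _
  filter_upwards [ae_eq_comp_gwFlip (hJ' k f), hJ' k f,
    show ∀ᵐ x ∂μ, _ from mapsTo_J_realForm hJ k hf]
    with x h1 h2 h3
  rw [h1, h2, h3, gwFlip_eq_add_one, Pi.add_apply, Pi.one_apply, neg_one_pow_val_add_one,
    map_mul, map_mul, conj_I, map_pow, map_neg, map_one]
  ring

theorem coeFn_J_J' (k : ℕ) (f : Lp ℂ 2 μ) :
    (↑(J k (J' k f)) : GWX → ℂ) =ᵐ[μ] fun x => I * (-1) ^ (x k).val * (↑f : GWX → ℂ) x := by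
  filter_upwards [hJ k (J' k f), ae_eq_comp_add_right (gwDelta k) (hJ' k f),
    ae_eq_comp_add_right (gwDelta k) (hJ k f)] with x h1 h2 h3
  rw [h1, h2, h3, add_gwDelta_self, neg_one_pow_val_add_one, jCoeff_add_gwDelta,
    add_gwDelta_add_gwDelta]
  linear_combination (-I * (-1) ^ (x k).val * (↑f : GWX → ℂ) x) * jCoeff_mul_self k x

theorem coeFn_walshOp (l : List ℕ) (f : Lp ℂ 2 μ) :
    (↑(walshOp J J' l f) : GWX → ℂ) =ᵐ[μ]
      fun x => I ^ l.length * walsh l x * (↑f : GWX → ℂ) x := by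
  induction l with
  | nil => exact .of_forall fun x => by simp [walshOp]
  | cons j l ih =>
    filter_upwards [coeFn_J_J' hJ hJ' j (walshOp J J' l f), ih] with x h1 h2
    change (↑(J j (J' j (walshOp J J' l f))) : GWX → ℂ) x = _
    rw [h1, h2, List.length_cons, pow_succ, walsh_cons]
    ring

theorem J_eq_smul_walshOp_iff {k : ℕ} {l : List ℕ} {ε : ℝ}
    (hl : ∀ x, jCoeff k x = ε * (I ^ l.length * walsh l x)) (f : Lp ℂ 2 μ) :
    J k f = ε • walshOp J J' l f ↔ (fun x => (↑f : GWX → ℂ) (x + gwDelta k)) =ᵐ[μ] f := by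
  have hW : (↑(ε • walshOp J J' l f) : GWX → ℂ) =ᵐ[μ] fun x => jCoeff k x * (↑f : GWX → ℂ) x := by
    filter_upwards [Lp.coeFn_smul ε (walshOp J J' l f), coeFn_walshOp hJ hJ' l f] with x h1 h2
    rw [h1, Pi.smul_apply, h2, hl, Complex.real_smul]
    ring
  rw [Lp.ext_iff, (hJ k f).congr_left, hW.congr_right]
  exact Filter.eventually_congr (.of_forall fun x => mul_right_inj' (jCoeff_ne_zero k x))

end GWX

open GWX

/-- with the `c_k` of Theorem 3.11, `μ_X` the Haar probability measure on `X`
(characterized as a translation-invariant probability measure) and the invariant real form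
`L²(X, μ_X)^ℝ = {f : f(1-x) = conj(f(x)) a.e.}`, there is no bounded `ℝ`-linear map `T` of
`L²(X, μ_X)^ℝ` to itself with `T² = -id` which preserves the real inner product `Re⟨·,·⟩`
and commutes with (the restrictions of) every `J_k` and `J'_k`.  Hence the real
representation on `L²(X, μ_X)^ℝ` does not arise by restriction of scalars from a complex
one. -/
theorem gwC_real_form_no_complex_structure
    (μX : Measure GWX) [IsProbabilityMeasure μX]
    (hHaar : ∀ y : GWX, μX.map (· + y) = μX)
    (J J' : ℕ → Lp ℂ 2 μX → Lp ℂ 2 μX)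
    (hJ : ∀ k f, (↑(J k f) : GWX → ℂ) =ᵐ[μX] fun x =>
      gwSign k x * Complex.I * gwC k x * (↑f : GWX → ℂ) (x + gwDelta k))
    (hJ' : ∀ k f, (↑(J' k f) : GWX → ℂ) =ᵐ[μX] fun x =>
      (-1 : ℂ) ^ (x k).val * Complex.I * (↑(J k f) : GWX → ℂ) x)
    (HR : Set (Lp ℂ 2 μX))
    (hHR : HR = {f : Lp ℂ 2 μX | ∀ᵐ x ∂μX,
      (↑f : GWX → ℂ) (gwFlip x) = (starRingEnd ℂ) ((↑f : GWX → ℂ) x)}) :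
    ¬ ∃ T : Lp ℂ 2 μX → Lp ℂ 2 μX,
        (∀ f ∈ HR, T f ∈ HR) ∧
        (∀ f ∈ HR, ∀ g ∈ HR, T (f + g) = T f + T g) ∧
        (∀ (r : ℝ), ∀ f ∈ HR, T (r • f) = r • T f) ∧
        (∃ C : ℝ, ∀ f ∈ HR, ‖T f‖ ≤ C * ‖f‖) ∧
        (∀ f ∈ HR, T (T f) = -f) ∧
        (∀ f ∈ HR, ∀ g ∈ HR, (inner ℂ (T f) (T g) : ℂ).re = (inner ℂ f g : ℂ).re) ∧
        (∀ k : ℕ, ∀ f ∈ HR, T (J k f) = J k (T f) ∧ T (J' k f) = J' k (T f)) := by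
  change HR = realForm μX at hHR
  subst hHR
  rintro ⟨T, hT, -, hT_smul, -, hT_sq, -, hT_comm⟩
  have : μX.IsAddRightInvariant := ⟨hHaar⟩
  set one := Lp.const 2 μX (1 : ℂ) with hone_def
  have hone : one ∈ realForm μX := (const_mem_realForm_iff 1).2 (map_one _)
  have hinv (k : ℕ) : (fun x => (↑(T one) : GWX → ℂ) (x + gwDelta k)) =ᵐ[μX] T one := by
    obtain ⟨l, ε, hl⟩ := exists_jCoeff_eq_real_mul_I_pow_mul_walsh k
    have hJ_one : J k one = ε • walshOp J J' l one := (J_eq_smul_walshOp_iff hJ hJ' hl one).2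
      ((ae_eq_comp_add_right _ (Lp.coeFn_const 2 μX 1)).trans (Lp.coeFn_const 2 μX 1).symm)
    rw [← J_eq_smul_walshOp_iff hJ hJ' hl, ← (hT_comm k one hone).1, hJ_one,
      hT_smul ε _ (walshOp_mem (mapsTo_J_realForm hJ) (mapsTo_J'_realForm hJ hJ') l hone),
      map_walshOp (mapsTo_J_realForm hJ) (mapsTo_J'_realForm hJ hJ') hT_comm l hone]
  obtain ⟨c, hc⟩ := exists_eq_const_of_forall_ae_eq_add_gwDelta (T one) hinv
  obtain ⟨r, rfl⟩ := Complex.conj_eq_iff_real.1 ((const_mem_realForm_iff c).1 (hc ▸ hT one hone))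
  have hr : T one = r • one := by
    rw [hc, hone_def, Lp.smul_const, Complex.real_smul, mul_one]
  have hsq := hT_sq one hone
  rw [hr, hT_smul r one hone, hr, smul_smul, hone_def, Lp.smul_const, ← map_neg] at hsq
  have hre := congrArg Complex.re (Lp.const_injective 2 hsq)
  simp only [Complex.real_smul, mul_one, Complex.ofReal_re, Complex.neg_re, Complex.one_re] at hre
  nlinarith
end
end
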